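/- arXiv:1203.1557 — 2 statements merged into one kernel-verified Lean document; each statement's English description precedes it below -/
import Mathlib

section
/- For every nonnegative integer n and every positive integer p, the sum over k from 0 to n of H_k/(k+p) equals H_{n+p}·(H_{n+1} + H_{p-1}) − (1/2)·[(H_{n+1} + H_{p-1})^2 + H_{n+1}^{(2)} + H_{p-1}^{(2)}] − the sum over k from 0 to p−2 of H_k/(n+k+2). -/
/-- The `n`-th harmonic number `H_n = ∑_{k=1}^n 1/k`, with `H_0 = 0`. -/
def H (n : ℕ) : ℚ := ∑ k ∈ Finset.range n, 1 / ((k : ℚ) + 1)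

/-- The generalized harmonic number of order 2, `H_n^{(2)} = ∑_{k=1}^n 1/k^2`, with `H_0^{(2)} = 0`. -/
def H2 (n : ℕ) : ℚ := ∑ k ∈ Finset.range n, 1 / ((k : ℚ) + 1) ^ 2


lemma Hsucc (k : ℕ) : H (k + 1) = H k + 1 / ((k : ℚ) + 1) := by
  simp [H, Finset.sum_range_succ]

lemma H2succ (k : ℕ) : H2 (k + 1) = H2 k + 1 / ((k : ℚ) + 1) ^ 2 := by
  simp [H2, Finset.sum_range_succ]

lemma Hzero : H 0 = 0 := by simp [H]

lemma deltaG (n m : ℕ) :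
    ∑ j ∈ Finset.range m, H j / ((n : ℚ) + j + 3)
      = ∑ j ∈ Finset.range m, H j / ((n : ℚ) + j + 2)
        + (H (n + m + 1) - H (n + 1) - H m) / ((n : ℚ) + 2)
        - 1 / ((n : ℚ) + 2) ^ 2
        + 1 / (((n : ℚ) + 2) * ((n : ℚ) + m + 2))
        + H m / ((n : ℚ) + m + 2) := by
  have hx : (n : ℚ) + 2 ≠ 0 := by positivity
  induction m with
  | zero =>
      simp [Hzero]
      field_simp
      ring
  | succ m ih =>
      have hy : (n : ℚ) + m + 2 ≠ 0 := by positivity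
      have hz : (n : ℚ) + m + 3 ≠ 0 := by positivity
      have hw : (m : ℚ) + 1 ≠ 0 := by positivity
      rw [Finset.sum_range_succ, Finset.sum_range_succ, ih]
      have h1 : n + (m + 1) + 1 = (n + m + 1) + 1 := by omega
      rw [h1, Hsucc (n + m + 1), Hsucc m]
      push_cast
      field_simp
      ring

lemma baseCase (q : ℕ) :
    (0 : ℚ) = H (q + 1) * (H 1 + H q)
        - (1 / 2) * ((H 1 + H q) ^ 2 + H2 1 + H2 q)
        - ∑ k ∈ Finset.range q, H k / ((k : ℚ) + 2) := by
  induction q with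
  | zero => norm_num [H, H2]
  | succ q ih =>
      have hw : (q : ℚ) + 1 ≠ 0 := by positivity
      have hw2 : (q : ℚ) + 2 ≠ 0 := by positivity
      have hS : ∑ k ∈ Finset.range q, H k / ((k : ℚ) + 2)
          = H (q + 1) * (H 1 + H q) - (1 / 2) * ((H 1 + H q) ^ 2 + H2 1 + H2 q) := by
        linarith [ih]
      rw [Finset.sum_range_succ, hS, Hsucc (q + 1), Hsucc q, H2succ q]
      have h1 : H 1 = 1 := by simp [H]
      have h2 : H2 1 = 1 := by simp [H2]
      rw [h1, h2]
      push_cast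
      field_simp
      ring

lemma main' (n q : ℕ) :
    ∑ k ∈ Finset.range (n + 1), H k / ((k : ℚ) + (q + 1)) =
      H (n + q + 1) * (H (n + 1) + H q)
        - (1 / 2) * ((H (n + 1) + H q) ^ 2 + H2 (n + 1) + H2 q)
        - ∑ k ∈ Finset.range q, H k / ((n : ℚ) + k + 2) := by
  induction n with
  | zero =>
      rw [Finset.sum_range_one]
      have e : ∀ k : ℕ, ((0 : ℕ) : ℚ) + (k : ℚ) + 2 = (k : ℚ) + 2 := by
        intro k; push_cast; ring
      have e' : ∀ k : ℕ, (0 : ℚ) + (k : ℚ) + 2 = (k : ℚ) + 2 := by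
        intro k; ring
      simp only [e, e', Hzero, Nat.cast_zero, zero_div, Nat.zero_add]
      exact baseCase q
  | succ n ih =>
      have hx : (n : ℚ) + 2 ≠ 0 := by positivity
      have hy : (n : ℚ) + q + 2 ≠ 0 := by positivity
      rw [Finset.sum_range_succ, ih]
      have e1 : ∀ k : ℕ, ((n + 1 : ℕ) : ℚ) + (k : ℚ) + 2 = (n : ℚ) + k + 3 := by
        intro k; push_cast; ring
      simp only [e1]
      rw [deltaG n q]
      have h1 : n + 1 + q + 1 = (n + q + 1) + 1 := by omega
      rw [h1, Hsucc (n + q + 1), Hsucc (n + 1), H2succ (n + 1)]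
      push_cast
      field_simp
      ring

theorem stmt_0 (n p : ℕ) (hp : 0 < p) :
    ∑ k ∈ Finset.range (n + 1), H k / ((k : ℚ) + p) =
      H (n + p) * (H (n + 1) + H (p - 1))
        - (1 / 2) * ((H (n + 1) + H (p - 1)) ^ 2 + H2 (n + 1) + H2 (p - 1))
        - ∑ k ∈ Finset.range (p - 1), H k / ((n : ℚ) + k + 2) := by
  obtain ⟨q, rfl⟩ : ∃ q, p = q + 1 := ⟨p - 1, (Nat.succ_pred_eq_of_pos hp).symm⟩
  have e : ∀ k : ℕ, (k : ℚ) + ((q : ℚ) + 1) = (k : ℚ) + (((q + 1 : ℕ) : ℚ)) := by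
    intro k; push_cast; ring
  have h := main' n q
  simp only [e] at h
  simpa [Nat.add_sub_cancel, show n + (q + 1) = n + q + 1 from rfl] using h
end

section
/- For every nonnegative integer n and every integer p with 0 ≤ p ≤ n, the sum over k from p+1 to n of H_k/(k−p) equals (1/2)·[(H_{n−p+1} + H_p)^2 + H_{n−p+1}^{(2)} + H_p^{(2)}] − H_{n+1}·(H_p + 1/(n−p+1)) + the sum over k from 0 to p−1 of H_k/(n−p+k+2). -/
lemma H_succ (n : ℕ) : H (n + 1) = H n + 1 / ((n : ℚ) + 1) :=
  Finset.sum_range_succ _ n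

lemma H2_succ (n : ℕ) : H2 (n + 1) = H2 n + 1 / ((n : ℚ) + 1) ^ 2 :=
  Finset.sum_range_succ _ n

lemma H_split (a b : ℕ) :
    H (a + b) = H a + ∑ k ∈ Finset.range b, 1 / ((a : ℚ) + k + 1) := by
  induction b with
  | zero => simp
  | succ b ih =>
    rw [show a + (b + 1) = (a + b) + 1 from rfl, H_succ, ih, Finset.sum_range_succ]
    push_cast
    ring

lemma sum_shift (p : ℕ) (x : ℚ) :
    ∑ k ∈ Finset.range p, 1 / (x + k + 1) =
      ∑ k ∈ Finset.range p, 1 / (x + k) - 1 / x + 1 / (x + p) := by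
  induction p with
  | zero => simp
  | succ p ih =>
    rw [Finset.sum_range_succ, Finset.sum_range_succ, ih]
    push_cast
    ring

lemma auxA (p : ℕ) (x : ℚ) (hx : 0 < x) :
    ∑ k ∈ Finset.range p, H k / ((x + k) * (x + k + 1)) =
      p * H p / (x * (x + p)) - (∑ k ∈ Finset.range p, 1 / (x + k + 1)) / x := by
  induction p with
  | zero => simp
  | succ p ih =>
    have h1 : x ≠ 0 := ne_of_gt hx
    have h2 : x + p ≠ 0 := by positivity
    have h3 : x + p + 1 ≠ 0 := by positivity
    have h4 : (p : ℚ) + 1 ≠ 0 := by positivity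
    rw [Finset.sum_range_succ, Finset.sum_range_succ, ih, H_succ]
    push_cast
    field_simp
    ring

lemma baseB (p : ℕ) :
    (1 / 2) * ((1 + H p) ^ 2 + 1 + H2 p) - H (p + 1) * (H p + 1)
      + ∑ k ∈ Finset.range p, H k / ((k : ℚ) + 2) = 0 := by
  induction p with
  | zero => norm_num [H, H2, Finset.sum_range_succ]
  | succ p ih =>
    have h4 : (p : ℚ) + 1 ≠ 0 := by positivity
    have h5 : (p : ℚ) + 2 ≠ 0 := by positivity
    have hs : ∑ k ∈ Finset.range p, H k / ((k : ℚ) + 2)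
        = H (p + 1) * (H p + 1) - (1 / 2) * ((1 + H p) ^ 2 + 1 + H2 p) := by
      linarith [ih]
    rw [Finset.sum_range_succ, hs, H_succ (p + 1), H_succ p, H2_succ]
    push_cast
    field_simp
    ring

set_option maxHeartbeats 1000000 in
theorem stmt_2 (n p : ℕ) (hp : p ≤ n) :
    ∑ k ∈ Finset.Icc (p + 1) n, H k / ((k : ℚ) - p) =
      (1 / 2) * ((H (n - p + 1) + H p) ^ 2 + H2 (n - p + 1) + H2 p)
        - H (n + 1) * (H p + 1 / ((n : ℚ) - p + 1))
        + ∑ k ∈ Finset.range p, H k / ((n : ℚ) - p + k + 2) := by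
  induction n, hp using Nat.le_induction with
  | base =>
    rw [Finset.Icc_eq_empty (by omega), Finset.sum_empty, Nat.sub_self]
    have h1 : H (0 + 1) = 1 := by simp [H]
    have h2 : H2 (0 + 1) = 1 := by simp [H2]
    have h3 : (p : ℚ) - p + 1 = 1 := by ring
    have hsum : ∑ k ∈ Finset.range p, H k / ((p : ℚ) - p + k + 2)
        = ∑ k ∈ Finset.range p, H k / ((k : ℚ) + 2) := by
      apply Finset.sum_congr rfl
      intro k _
      have : (p : ℚ) - p + k + 2 = (k : ℚ) + 2 := by ring
      rw [this]
    rw [hsum, h1, h2, h3, show (1 : ℚ) / 1 = 1 from by norm_num]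
    linarith [baseB p]
  | succ n hpn ih =>
    obtain ⟨m, rfl⟩ : ∃ m, n = m + p := ⟨n - p, by omega⟩
    simp only [Nat.add_sub_cancel] at ih ⊢
    rw [show m + p + 1 - p + 1 = (m + 1) + 1 by omega]
    rw [Finset.sum_Icc_succ_top (by omega : p + 1 ≤ m + p + 1), ih]
    rw [H_succ (m + 1), H2_succ (m + 1), H_succ (m + p + 1)]
    have hx : (0 : ℚ) < (m : ℚ) + 2 := by positivity
    have hH : H (m + p + 1) = H (m + 1) + ∑ k ∈ Finset.range p, 1 / ((m : ℚ) + 2 + k) := by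
      rw [show m + p + 1 = (m + 1) + p by omega, H_split]
      congr 1
      refine Finset.sum_congr rfl fun k _ => ?_
      push_cast
      ring_nf
    have hQ := auxA p ((m : ℚ) + 2) hx
    have hshift := sum_shift p ((m : ℚ) + 2)
    have hnew : ∑ k ∈ Finset.range p, H k / ((↑(m + p + 1) : ℚ) - p + k + 2)
        = ∑ k ∈ Finset.range p, H k / ((m : ℚ) + 2 + k)
          - ∑ k ∈ Finset.range p,
              H k / ((((m : ℚ) + 2) + k) * (((m : ℚ) + 2) + k + 1)) := by
      rw [← Finset.sum_sub_distrib]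
      refine Finset.sum_congr rfl fun k _ => ?_
      have hk1 : (m : ℚ) + 2 + k ≠ 0 := by positivity
      have hk2 : (m : ℚ) + 2 + k + 1 ≠ 0 := by positivity
      have he : ((↑(m + p + 1) : ℚ)) - p + k + 2 = (m : ℚ) + 2 + k + 1 := by push_cast; ring
      rw [he]
      field_simp
      ring
    have hold : ∑ k ∈ Finset.range p, H k / ((↑(m + p) : ℚ) - p + k + 2)
        = ∑ k ∈ Finset.range p, H k / ((m : ℚ) + 2 + k) := by
      refine Finset.sum_congr rfl fun k _ => ?_
      have he : (↑(m + p) : ℚ) - p + k + 2 = (m : ℚ) + 2 + k := by push_cast; ring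
      rw [he]
    have d3 : ((m + p + 1 : ℕ) : ℚ) - p + 1 = (m : ℚ) + 2 := by push_cast; ring
    have d1 : ((m + p + 1 : ℕ) : ℚ) - p = (m : ℚ) + 1 := by push_cast; ring
    have d2 : ((m + p : ℕ) : ℚ) - p + 1 = (m : ℚ) + 1 := by push_cast; ring
    rw [hnew, hold, hQ, hshift, hH, d3, d1, d2]
    push_cast
    have f1 : (m : ℚ) + 1 ≠ 0 := by positivity
    have f2 : (m : ℚ) + 2 ≠ 0 := by positivity
    have f3 : (m : ℚ) + 2 + p ≠ 0 := by positivity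
    have f4 : (m : ℚ) + p + 1 + 1 ≠ 0 := by positivity
    set A := H (m + 1)
    set B := H p
    set D := H2 (m + 1)
    set E := H2 p
    set U := ∑ k ∈ Finset.range p, H k / ((m : ℚ) + 2 + k)
    set V := ∑ k ∈ Finset.range p, 1 / ((m : ℚ) + 2 + k)
    field_simp [f1, f2, f3, f4]
    ring
end
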